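/- arXiv:1205.6294 — 2 statements merged into one kernel-verified Lean document; each statement's English description precedes it below -/
import Mathlib

section
/- With B̄^C_{r,s}(x,z) = z^{r+2s} B^C_{r,s}(x/z) the homogenization of the type-C Bernoulli-like polynomial, for any ε ∈ {-1, 0, 1}: (i) B̄^C_{r,s}(x_p, z) + ε B̄^C_{r,s}(x_q, z) lies in the ideal (x_p + ε x_q), and (ii) B̄^C_{r,s}(x_p, z) + ε B̄^C_{r,s}(x_q, z) ≡ (x_p + ε x_q)(x_p^{r-1} + (ε x_q)^{r-1})(x_p · ε x_q)^s modulo the ideal (x_p + ε x_q - z) in R[x_p, x_q, z]. -/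
/-!
The forward difference lowers the degree of a polynomial by exactly one in characteristic zero,
so `B` has degree at most `r + 2s`, and a polynomial with vanishing difference is constant. The
right-hand side `f` of the difference equation satisfies `f(-x-1) = f(x)`, so `B(x) + B(-x)` has
vanishing difference; as `B(0) = 0`, `B` is odd. Oddness gives `B̄(εy, z) = ε B̄(y, z)` for
`ε ∈ {-1, 0, 1}`, so the left side of (i) is `B̄(x_p, z) - B̄(-εx_q, z)`, divisible by
`x_p + εx_q`. Homogenizing the difference equation and substituting `(x, z) = (-v, u + v)` yields
`B̄(u, u + v) + B̄(v, u + v) = (u + v)(u^{r-1} + v^{r-1})(uv)^s`, which is (ii) with `u = x_p`,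
`v = εx_q` once `z` is replaced by `u + v` modulo the ideal.
-/

open Polynomial

lemma MvPolynomial.aeval_sub_aeval_mem {R A σ : Type*} [CommRing R] [CommRing A] [Algebra R A]
    {I : Ideal A} {f g : σ → A} (h : ∀ i, f i - g i ∈ I) (P : MvPolynomial σ R) :
    aeval f P - aeval g P ∈ I := by
  have key : (Ideal.Quotient.mkₐ R I).comp (aeval f) = (Ideal.Quotient.mkₐ R I).comp (aeval g) := by
    rw [comp_aeval, comp_aeval]
    congr 1
    funext i
    exact Ideal.Quotient.eq.2 (h i)
  exact Ideal.Quotient.eq.1 (DFunLike.congr_fun key P)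

namespace Polynomial

variable {R : Type*} [CommRing R]

section FwdDiff

lemma fwdDiff_eval (P : R[X]) : fwdDiff 1 P.eval = (P.comp (X + 1) - P).eval := by
  funext x
  simp [fwdDiff]

variable [IsDomain R] [CharZero R]

lemma natDegree_le_of_fwdDiff_iter_eq_zero {P : R[X]} {n : ℕ}
    (h : (fwdDiff 1)^[n + 1] P.eval = 0) : P.natDegree ≤ n := by
  by_contra! hlt
  have hP : P ≠ 0 := by rintro rfl; simp at hlt
  have hiter : (fwdDiff 1)^[P.natDegree] P.eval = 0 := by
    obtain ⟨k, hk⟩ := Nat.exists_eq_add_of_le' hlt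
    rw [hk, Function.iterate_add_apply, h]
    exact Function.iterate_fixed (f := fwdDiff (1 : R)) (by funext; simp [fwdDiff]) k
  have := congrFun (P.fwdDiff_iter_degree_eq_factorial ▸ hiter) 0
  simp [hP, Nat.factorial_ne_zero] at this

lemma natDegree_le_of_comp_X_add_one_sub_eq {P f : R[X]} {n : ℕ}
    (h : P.comp (X + 1) - P = f) (hf : f.natDegree < n) : P.natDegree ≤ n :=
  natDegree_le_of_fwdDiff_iter_eq_zero <| by
    rw [Function.iterate_succ_apply, fwdDiff_eval, h]
    exact fwdDiff_iter_eq_zero_of_degree_lt hf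

lemma eq_C_of_comp_X_add_one_eq {P : R[X]} (h : P.comp (X + 1) = P) : P = C (P.eval 0) := by
  rw [← coeff_zero_eq_eval_zero]
  exact eq_C_of_natDegree_le_zero <| natDegree_le_of_fwdDiff_iter_eq_zero <| by
    funext x
    simp [fwdDiff_eval, h]

lemma comp_neg_X_eq_neg_of_comp_X_add_one_sub_eq {P f : R[X]} (h : P.comp (X + 1) - P = f)
    (hf : f.comp (-X - 1) = f) (h0 : P.eval 0 = 0) : P.comp (-X) = -P := by
  have hshift : (P.comp (-X)).comp (X + 1) - P.comp (-X) = -f := by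
    rw [← hf, ← h]
    simp only [comp_assoc, sub_comp, neg_comp, X_comp, add_comp, one_comp]
    ring_nf
  have hper := eq_C_of_comp_X_add_one_eq (P := P + P.comp (-X)) <| by
    linear_combination (norm := skip) h + hshift
    simp only [add_comp]
    ring
  simpa [eval_comp, h0, add_eq_zero_iff_eq_neg'] using hper

end FwdDiff

section Homogenize

variable {A : Type*} [CommRing A] [Algebra R A]

lemma aeval_homogenize_eq_sum (p : R[X]) (n : ℕ) (x z : A) :
    MvPolynomial.aeval ![x, z] (p.homogenize n)
      = ∑ i ∈ Finset.range (n + 1), algebraMap R A (p.coeff i) * x ^ i * z ^ (n - i) := by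
  simp only [homogenize, map_sum, MvPolynomial.aeval_monomial,
    Finset.Nat.sum_antidiagonal_eq_sum_range_succ_mk]
  refine Finset.sum_congr rfl fun i _ ↦ ?_
  rw [Finsupp.prod_fintype _ _ fun _ ↦ pow_zero _]
  simp [mul_assoc]

lemma aeval_homogenize_comp {p : R[X]} {n : ℕ} (hp : p.natDegree ≤ n) (a b : R) (x z : A) :
    MvPolynomial.aeval ![x, z] ((p.comp (C a * X + C b)).homogenize n)
      = MvPolynomial.aeval ![algebraMap R A a * x + algebraMap R A b * z, z] (p.homogenize n) := by
  set g : Fin 2 → MvPolynomial (Fin 2) R := ![.C a * .X 0 + .C b * .X 1, .X 1]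
  have hhom : (MvPolynomial.aeval g (p.homogenize n)).IsHomogeneous n := by
    have hg : ∀ i, (g i).IsHomogeneous 1 := Fin.forall_fin_two.2
      ⟨(MvPolynomial.isHomogeneous_C_mul_X a 0).add (MvPolynomial.isHomogeneous_C_mul_X b 1),
        MvPolynomial.isHomogeneous_X R 1⟩
    simpa only [one_mul] using (isHomogeneous_homogenize p).aeval g hg
  rw [homogenize_eq_of_isHomogeneous hhom, MvPolynomial.comp_aeval_apply]
  · congr 2
    ext i
    fin_cases i <;> simp [g]
  · rw [MvPolynomial.comp_aeval_apply, aeval_homogenize_of_eq_one hp _ (by simp [g])]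
    simp [g, comp_eq_aeval]

lemma aeval_homogenize_mul_left {p : R[X]} {n : ℕ} (hp : p.natDegree ≤ n) {c : R}
    (hc : p.comp (C c * X) = C c * p) (x z : A) :
    MvPolynomial.aeval ![algebraMap R A c * x, z] (p.homogenize n)
      = algebraMap R A c * MvPolynomial.aeval ![x, z] (p.homogenize n) := by
  have := aeval_homogenize_comp hp c 0 x z
  rw [C_0, add_zero, hc, homogenize_C_mul, map_mul, MvPolynomial.aeval_C] at this
  simpa using this.symm

end Homogenize

noncomputable def bernoulliCDiff (r s : ℕ) : R[X] :=
  ((X + 1) ^ (r - 1) + (-X) ^ (r - 1)) * (X + 1) ^ s * (-X) ^ s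

lemma natDegree_bernoulliCDiff_le (r s : ℕ) :
    (bernoulliCDiff r s : R[X]).natDegree ≤ r - 1 + 2 * s := by
  unfold bernoulliCDiff
  compute_degree
  omega

lemma bernoulliCDiff_comp_neg_X_sub_one (r s : ℕ) :
    (bernoulliCDiff r s : R[X]).comp (-X - 1) = bernoulliCDiff r s := by
  simp only [bernoulliCDiff, mul_comp, add_comp, pow_comp, neg_comp, X_comp, one_comp]
  ring

lemma homogenize_bernoulliCDiff {r : ℕ} (hr : 0 < r) (s : ℕ) :
    (bernoulliCDiff r s : R[X]).homogenize (r + 2 * s)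
      = .X 1 * ((.X 0 + .X 1) ^ (r - 1) + (-.X 0) ^ (r - 1)) * (.X 0 + .X 1) ^ s * (-.X 0) ^ s := by
  apply homogenize_eq_of_isHomogeneous
  · have hX : (MvPolynomial.X 0 + .X 1 : MvPolynomial (Fin 2) R).IsHomogeneous 1 :=
      (MvPolynomial.isHomogeneous_X R 0).add (MvPolynomial.isHomogeneous_X R 1)
    have hnegX : (-MvPolynomial.X 0 : MvPolynomial (Fin 2) R).IsHomogeneous 1 :=
      (MvPolynomial.isHomogeneous_X R 0).neg
    convert (((MvPolynomial.isHomogeneous_X R 1).mul ((hX.pow (r - 1)).add (hnegX.pow (r - 1)))).mul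
      (hX.pow s)).mul (hnegX.pow s) using 1
    omega
  · simp [bernoulliCDiff]

structure IsBernoulliC (r s : ℕ) (B : R[X]) : Prop where
  comp_X_add_one_sub : B.comp (X + 1) - B = bernoulliCDiff r s
  eval_zero : B.eval 0 = 0

namespace IsBernoulliC

variable [IsDomain R] [CharZero R] {r s : ℕ} {B : R[X]}

lemma natDegree_le (h : IsBernoulliC r s B) (hr : 0 < r) : B.natDegree ≤ r + 2 * s :=
  natDegree_le_of_comp_X_add_one_sub_eq h.comp_X_add_one_sub
    ((natDegree_bernoulliCDiff_le r s).trans_lt (by omega))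

lemma comp_neg_X (h : IsBernoulliC r s B) : B.comp (-X) = -B :=
  comp_neg_X_eq_neg_of_comp_X_add_one_sub_eq h.comp_X_add_one_sub
    (bernoulliCDiff_comp_neg_X_sub_one r s) h.eval_zero

lemma comp_C_mul_X (h : IsBernoulliC r s B) {ε : R} (hε : ε = -1 ∨ ε = 0 ∨ ε = 1) :
    B.comp (C ε * X) = C ε * B := by
  rcases hε with rfl | rfl | rfl
  · simpa using h.comp_neg_X
  · simp [h.eval_zero]
  · simp

variable {A : Type*} [CommRing A] [Algebra R A]

lemma aeval_homogenize_mul_left (h : IsBernoulliC r s B) (hr : 0 < r) {ε : R}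
    (hε : ε = -1 ∨ ε = 0 ∨ ε = 1) (x z : A) :
    MvPolynomial.aeval ![algebraMap R A ε * x, z] (B.homogenize (r + 2 * s))
      = algebraMap R A ε * MvPolynomial.aeval ![x, z] (B.homogenize (r + 2 * s)) :=
  Polynomial.aeval_homogenize_mul_left (h.natDegree_le hr) (h.comp_C_mul_X hε) x z

lemma aeval_homogenize_add (h : IsBernoulliC r s B) (hr : 0 < r) (u v : A) :
    MvPolynomial.aeval ![u, u + v] (B.homogenize (r + 2 * s))
      + MvPolynomial.aeval ![v, u + v] (B.homogenize (r + 2 * s))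
      = (u + v) * (u ^ (r - 1) + v ^ (r - 1)) * (u * v) ^ s := by
  have hshift := congrArg (fun P ↦ MvPolynomial.aeval ![-v, u + v] (P.homogenize (r + 2 * s)))
    h.comp_X_add_one_sub
  have hodd := h.aeval_homogenize_mul_left hr (ε := -1) (by simp) v (u + v)
  rw [show (X + 1 : R[X]) = C 1 * X + C 1 by simp] at hshift
  simp only [homogenize_sub, map_sub, aeval_homogenize_comp (h.natDegree_le hr),
    homogenize_bernoulliCDiff hr] at hshift
  simp only [map_one, mul_neg, one_mul, neg_add_cancel_comm_assoc, map_mul, MvPolynomial.aeval_X,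
    Matrix.cons_val_zero, Matrix.cons_val_one, Matrix.cons_val_fin_one, map_add, map_pow, map_neg,
    neg_neg, neg_mul] at hshift hodd
  linear_combination hshift + hodd

lemma aeval_homogenize_add_mul_mem_span (h : IsBernoulliC r s B) (hr : 0 < r) {ε : R}
    (hε : ε = -1 ∨ ε = 0 ∨ ε = 1) (x y z : A) :
    MvPolynomial.aeval ![x, z] (B.homogenize (r + 2 * s))
        + algebraMap R A ε * MvPolynomial.aeval ![y, z] (B.homogenize (r + 2 * s))
      ∈ Ideal.span {x + algebraMap R A ε * y} := by
  have hneg := h.aeval_homogenize_mul_left hr (ε := -ε)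
    (by rcases hε with rfl | rfl | rfl <;> norm_num) y z
  rw [map_neg, neg_mul, neg_mul] at hneg
  rw [← neg_eq_iff_eq_neg.mpr hneg, ← sub_eq_add_neg]
  exact MvPolynomial.aeval_sub_aeval_mem (Fin.forall_fin_two.2 ⟨by simp, by simp⟩) _

lemma aeval_homogenize_add_mul_sub_mem_span (h : IsBernoulliC r s B) (hr : 0 < r) {ε : R}
    (hε : ε = -1 ∨ ε = 0 ∨ ε = 1) (x y z : A) :
    MvPolynomial.aeval ![x, z] (B.homogenize (r + 2 * s))
        + algebraMap R A ε * MvPolynomial.aeval ![y, z] (B.homogenize (r + 2 * s))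
        - (x + algebraMap R A ε * y) * (x ^ (r - 1) + (algebraMap R A ε * y) ^ (r - 1))
          * (x * (algebraMap R A ε * y)) ^ s
      ∈ Ideal.span {x + algebraMap R A ε * y - z} := by
  rw [← h.aeval_homogenize_mul_left hr hε, ← h.aeval_homogenize_add hr, add_sub_add_comm]
  have hz : z - (x + algebraMap R A ε * y) ∈ Ideal.span {x + algebraMap R A ε * y - z} :=
    Ideal.mem_span_singleton.2 ⟨-1, by ring⟩
  refine Ideal.add_mem _ ?_ ?_ <;>
    exact MvPolynomial.aeval_sub_aeval_mem (Fin.forall_fin_two.2 ⟨by simp, hz⟩) _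

end IsBernoulliC

end Polynomial

/-- With B̄^C_{r,s}(x,z) the homogenization of the type-C Bernoulli-like polynomial,
for ε ∈ {-1,0,1}: (i) B̄^C(x_p,z) + ε B̄^C(x_q,z) ∈ (x_p + ε x_q), and
(ii) B̄^C(x_p,z) + ε B̄^C(x_q,z) ≡ (x_p + ε x_q)(x_p^{r-1} + (ε x_q)^{r-1})(x_p·ε x_q)^s
modulo (x_p + ε x_q - z).  Variables: X 0 = x_p, X 1 = x_q, X 2 = z. -/
theorem stmt11 (r s : ℕ) (hr : 0 < r) (B : ℝ[X])
    (hB : B.comp (X + 1) - B = ((X + 1) ^ (r - 1) + (-X) ^ (r - 1)) * (X + 1) ^ s * (-X) ^ s)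
    (hB0 : B.eval 0 = 0)
    (ε : ℝ) (hε : ε = -1 ∨ ε = 0 ∨ ε = 1) :
    ((∑ i ∈ Finset.range (r + 2 * s + 1),
        MvPolynomial.C (B.coeff i) * MvPolynomial.X 0 ^ i
          * MvPolynomial.X 2 ^ (r + 2 * s - i))
      + MvPolynomial.C ε * (∑ i ∈ Finset.range (r + 2 * s + 1),
        MvPolynomial.C (B.coeff i) * MvPolynomial.X 1 ^ i
          * MvPolynomial.X 2 ^ (r + 2 * s - i))
      ∈ Ideal.span {(MvPolynomial.X 0 + MvPolynomial.C ε * MvPolynomial.X 1 :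
          MvPolynomial (Fin 3) ℝ)})
    ∧
    ((∑ i ∈ Finset.range (r + 2 * s + 1),
        MvPolynomial.C (B.coeff i) * MvPolynomial.X 0 ^ i
          * MvPolynomial.X 2 ^ (r + 2 * s - i))
      + MvPolynomial.C ε * (∑ i ∈ Finset.range (r + 2 * s + 1),
        MvPolynomial.C (B.coeff i) * MvPolynomial.X 1 ^ i
          * MvPolynomial.X 2 ^ (r + 2 * s - i)))
      - (MvPolynomial.X 0 + MvPolynomial.C ε * MvPolynomial.X 1)
          * (MvPolynomial.X 0 ^ (r - 1) + (MvPolynomial.C ε * MvPolynomial.X 1) ^ (r - 1))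
          * (MvPolynomial.X 0 * (MvPolynomial.C ε * MvPolynomial.X 1)) ^ s
      ∈ Ideal.span {(MvPolynomial.X 0 + MvPolynomial.C ε * MvPolynomial.X 1
          - MvPolynomial.X 2 : MvPolynomial (Fin 3) ℝ)} := by
  have hBC : IsBernoulliC r s B := ⟨hB, hB0⟩
  have hsum (x z : MvPolynomial (Fin 3) ℝ) :
      ∑ i ∈ Finset.range (r + 2 * s + 1),
        MvPolynomial.C (B.coeff i) * x ^ i * z ^ (r + 2 * s - i)
        = MvPolynomial.aeval ![x, z] (B.homogenize (r + 2 * s)) :=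
    (aeval_homogenize_eq_sum B _ x z).symm
  simp only [hsum]
  exact ⟨hBC.aeval_homogenize_add_mul_mem_span hr hε _ _ _,
    hBC.aeval_homogenize_add_mul_sub_mem_span hr hε _ _ _⟩
end

section
/- The restriction of the homogenized type-C Bernoulli-like polynomial to z=0 satisfies B̄^C_{r,s}(x,0) = 2·B̄^B_{r,s}(x,0); that is, B̄^C_{r,s}(x,0) = (-1)^s · 2x^{r+2s}/(r+2s) if r is odd, and 0 if r is even. -/
/-!
Evaluating the homogenization `∑ cᵢ xⁱ z^(n-i)` at `z = 0` leaves only the top term `c_n xⁿ`,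
with `n = r + 2s`. For any polynomial `P`, the forward difference `P(x+1) - P(x)` has
`n · P.coeff n` as its coefficient of `x^(n-1)`, so the top coefficient of `B` is read off from the
right-hand side of its difference equation: it is `(-1)^s/n` times the coefficient of `x^(r-1)` in
`Q = ((x+1)^r - (-x)^r)/(2x+1)`, resp. in `(x+1)^(r-1) + (-x)^(r-1)`. Both coefficients come
from `1 + (-1)^(r-1)`, halved in the type-B case, which gives the factor `2` and the parity split.
-/

open Polynomial Finset

theorem sum_range_succ_mul_zero_pow {R : Type*} [Semiring R] (f : ℕ → R) (n : ℕ) :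
    ∑ i ∈ range (n + 1), f i * (0 : R) ^ (n - i) = f n := by
  rw [sum_range_succ, Nat.sub_self, pow_zero, mul_one,
    sum_eq_zero fun i hi => by rw [zero_pow (by simp at hi; omega), mul_zero], zero_add]

section ForwardDifference

variable {R : Type*} [CommRing R]

theorem coeff_neg_X_pow_self (s : ℕ) : ((-X : R[X]) ^ s).coeff s = (-1) ^ s := by
  rw [neg_pow, ← C_1, ← C_neg, ← C_pow, coeff_C_mul_X_pow, if_pos rfl]

theorem coeff_comp_X_add_one {P : R[X]} {n : ℕ} (hP : P.natDegree ≤ n) (k : ℕ) :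
    (P.comp (X + 1)).coeff k = ∑ i ∈ range (n + 1), P.coeff i * i.choose k := by
  conv_lhs => rw [P.as_sum_range' (n + 1) (by omega)]
  simp only [comp, eval₂_finsetSum, finsetSum_coeff]
  refine sum_congr rfl fun i _ => ?_
  rw [← comp, monomial_comp, coeff_C_mul, coeff_X_add_one_pow]

theorem coeff_comp_X_add_one_sub_self {P : R[X]} {n : ℕ} (hP : P.natDegree ≤ n + 1) :
    (P.comp (X + 1) - P).coeff n = (n + 1) * P.coeff (n + 1) := by
  have hlow : ∑ i ∈ range n, P.coeff i * (i.choose n : R) = 0 :=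
    sum_eq_zero fun i hi => by rw [Nat.choose_eq_zero_of_lt (mem_range.mp hi)]; simp
  rw [coeff_sub, coeff_comp_X_add_one hP, sum_range_succ, sum_range_succ, hlow,
    Nat.choose_self, Nat.choose_succ_self_right]
  push_cast
  ring

theorem coeff_mul_X_add_one_pow_mul_neg_X_pow {A : R[X]} {m : ℕ} (hA : A.natDegree ≤ m)
    (s : ℕ) : (A * (X + 1) ^ s * (-X) ^ s).coeff (m + s + s) = A.coeff m * (-1) ^ s := by
  have h1 : ((X + 1 : R[X]) ^ s).natDegree ≤ s := by compute_degree
  have h2 : ((-X : R[X]) ^ s).natDegree ≤ s := by compute_degree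
  rw [coeff_mul_add_eq_of_natDegree_le (natDegree_mul_le.trans (by omega)) h2,
    coeff_mul_add_eq_of_natDegree_le hA h1, coeff_X_add_one_pow, Nat.choose_self,
    coeff_neg_X_pow_self, Nat.cast_one, mul_one]

theorem two_mul_coeff_of_two_mul_X_add_one_mul_eq {Q : R[X]} {m : ℕ} (hQ : Q.natDegree ≤ m)
    (h : (2 * X + 1) * Q = (X + 1) ^ (m + 1) - (-X) ^ (m + 1)) :
    2 * Q.coeff m = 1 + (-1) ^ m := by
  have hcoeff := congrArg (coeff · (m + 1)) h
  simp only [add_mul, coeff_add, coeff_sub, coeff_X_add_one_pow, Nat.choose_self,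
    coeff_neg_X_pow_self, one_mul, coeff_eq_zero_of_natDegree_lt (Nat.lt_succ_of_le hQ)] at hcoeff
  rw [show (2 : R[X]) = C 2 from rfl, mul_assoc, coeff_C_mul, coeff_X_mul, pow_succ] at hcoeff
  push_cast at hcoeff
  linear_combination hcoeff

variable [IsDomain R] [CharZero R]

theorem natDegree_le_natDegree_comp_X_add_one_sub_add_one (P : R[X]) :
    P.natDegree ≤ (P.comp (X + 1) - P).natDegree + 1 := by
  rcases Nat.eq_zero_or_pos P.natDegree with h0 | hpos
  · omega
  obtain ⟨m, hm⟩ : ∃ m, P.natDegree = m + 1 := ⟨_, (Nat.succ_pred_eq_of_pos hpos).symm⟩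
  have hP : P ≠ 0 := by rintro rfl; simp at hm
  have hcoeff : (P.comp (X + 1) - P).coeff m ≠ 0 := by
    rw [coeff_comp_X_add_one_sub_self hm.le, ← hm, ← leadingCoeff]
    exact mul_ne_zero (by exact_mod_cast m.succ_ne_zero) (leadingCoeff_ne_zero.mpr hP)
  have := le_natDegree_of_ne_zero hcoeff
  omega

theorem natCast_mul_coeff_of_comp_X_add_one_sub_eq {P A : R[X]} {m s : ℕ}
    (hA : A.natDegree ≤ m) (hP : P.comp (X + 1) - P = A * (X + 1) ^ s * (-X) ^ s) :
    ((m + 1 + 2 * s : ℕ) : R) * P.coeff (m + 1 + 2 * s) = A.coeff m * (-1) ^ s := by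
  have hdeg : P.natDegree ≤ m + s + s + 1 := by
    have h1 : ((X + 1 : R[X]) ^ s).natDegree ≤ s := by compute_degree
    have h2 : ((-X : R[X]) ^ s).natDegree ≤ s := by compute_degree
    have := natDegree_le_natDegree_comp_X_add_one_sub_add_one P
    have := natDegree_mul_le (p := A * (X + 1) ^ s) (q := (-X) ^ s)
    have := natDegree_mul_le (p := A) (q := (X + 1) ^ s)
    rw [hP] at *
    omega
  rw [show m + 1 + 2 * s = m + s + s + 1 by ring, ← coeff_mul_X_add_one_pow_mul_neg_X_pow hA,
    ← hP, coeff_comp_X_add_one_sub_self hdeg]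
  push_cast
  ring

theorem natDegree_le_of_two_mul_X_add_one_mul_eq {Q F : R[X]} {m : ℕ}
    (h : (2 * X + 1) * Q = F) (hF : F.natDegree ≤ m + 1) : Q.natDegree ≤ m := by
  rcases eq_or_ne Q 0 with rfl | hQ
  · simp
  have hlin : (2 * X + 1 : R[X]).natDegree = 1 := by compute_degree!
  rw [← h, natDegree_mul (by rintro h; simp [h] at hlin) hQ, hlin] at hF
  omega

end ForwardDifference

theorem stmt13_general (r s : ℕ) (hr : 0 < r) (Q BB BC : ℝ[X])
    (hQ : (2 * X + 1) * Q = (X + 1) ^ r - (-X) ^ r)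
    (hBB : BB.comp (X + 1) - BB = Q * (X + 1) ^ s * (-X) ^ s)
    (hBC : BC.comp (X + 1) - BC
      = ((X + 1) ^ (r - 1) + (-X) ^ (r - 1)) * (X + 1) ^ s * (-X) ^ s) :
    (∑ i ∈ Finset.range (r + 2 * s + 1),
        C (BC.coeff i) * X ^ i * (0 : ℝ[X]) ^ (r + 2 * s - i))
      = 2 * (∑ i ∈ Finset.range (r + 2 * s + 1),
        C (BB.coeff i) * X ^ i * (0 : ℝ[X]) ^ (r + 2 * s - i))
    ∧ (Odd r →
      (∑ i ∈ Finset.range (r + 2 * s + 1),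
          C (BC.coeff i) * X ^ i * (0 : ℝ[X]) ^ (r + 2 * s - i))
        = C ((-1 : ℝ) ^ s * 2 / ((r : ℝ) + 2 * s)) * X ^ (r + 2 * s))
    ∧ (Even r →
      (∑ i ∈ Finset.range (r + 2 * s + 1),
          C (BC.coeff i) * X ^ i * (0 : ℝ[X]) ^ (r + 2 * s - i)) = 0) := by
  obtain ⟨m, rfl⟩ : ∃ m, r = m + 1 := ⟨r - 1, by omega⟩
  rw [Nat.add_sub_cancel] at hBC
  have hQdeg := natDegree_le_of_two_mul_X_add_one_mul_eq (m := m) hQ (by compute_degree)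
  have hBBtop := natCast_mul_coeff_of_comp_X_add_one_sub_eq hQdeg hBB
  have hBCtop := natCast_mul_coeff_of_comp_X_add_one_sub_eq (m := m) (by compute_degree) hBC
  rw [coeff_add, coeff_X_add_one_pow, Nat.choose_self, coeff_neg_X_pow_self,
    Nat.cast_one] at hBCtop
  set n := m + 1 + 2 * s
  have hn : (n : ℝ) ≠ 0 := by positivity
  have hBC_eq : BC.coeff n = (1 + (-1) ^ m) * (-1) ^ s / n := by
    rw [eq_div_iff hn, mul_comm, hBCtop]
  simp only [sum_range_succ_mul_zero_pow, hBC_eq]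
  refine ⟨?_, fun hodd => ?_, fun heven => ?_⟩
  · rw [show BB.coeff n = Q.coeff m * (-1) ^ s / n by rw [eq_div_iff hn, mul_comm, hBBtop],
      ← two_mul_coeff_of_two_mul_X_add_one_mul_eq hQdeg hQ, ← C_ofNat, ← mul_assoc, ← C_mul]
    ring_nf
  · rw [(Nat.not_odd_iff_even.mp (Nat.odd_add_one.mp hodd)).neg_one_pow, one_add_one_eq_two]
    congr 2
    push_cast [n]
    ring
  · rw [(Nat.not_even_iff_odd.mp (Nat.even_add_one.mp heven)).neg_one_pow]
    simp

/-- Restriction to z = 0 of the homogenized type-C Bernoulli-like polynomial: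
B̄^C_{r,s}(x,0) = 2·B̄^B_{r,s}(x,0); i.e. it equals (-1)^s·2x^{r+2s}/(r+2s) if r is
odd and 0 if r is even. -/
theorem stmt13 (r s : ℕ) (hr : 0 < r) (Q BB BC : ℝ[X])
    (hQ : (2 * X + 1) * Q = (X + 1) ^ r - (-X) ^ r)
    (hBB : BB.comp (X + 1) - BB = Q * (X + 1) ^ s * (-X) ^ s)
    (hBB0 : BB.eval 0 = 0)
    (hBC : BC.comp (X + 1) - BC
      = ((X + 1) ^ (r - 1) + (-X) ^ (r - 1)) * (X + 1) ^ s * (-X) ^ s)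
    (hBC0 : BC.eval 0 = 0) :
    (∑ i ∈ Finset.range (r + 2 * s + 1),
        C (BC.coeff i) * X ^ i * (0 : ℝ[X]) ^ (r + 2 * s - i))
      = 2 * (∑ i ∈ Finset.range (r + 2 * s + 1),
        C (BB.coeff i) * X ^ i * (0 : ℝ[X]) ^ (r + 2 * s - i))
    ∧ (Odd r →
      (∑ i ∈ Finset.range (r + 2 * s + 1),
          C (BC.coeff i) * X ^ i * (0 : ℝ[X]) ^ (r + 2 * s - i))
        = C ((-1 : ℝ) ^ s * 2 / ((r : ℝ) + 2 * s)) * X ^ (r + 2 * s))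
    ∧ (Even r →
      (∑ i ∈ Finset.range (r + 2 * s + 1),
          C (BC.coeff i) * X ^ i * (0 : ℝ[X]) ^ (r + 2 * s - i)) = 0) :=
  stmt13_general r s hr Q BB BC hQ hBB hBC
end
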